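/- arXiv:2104.03254 — 3 statements merged into one kernel-verified Lean document; each statement's English description precedes it below -/
import Mathlib

section
/- Let f₁(x) = β₁x, F₁(x) = (λ(1−x) − ωx)/(β₁x), ψᵢ(x) = βᵢx − γᵢ − λ, xᵢ = (γᵢ+λ)/βᵢ for i = 1,2, and suppose x₁ < min(x₂, λ/(λ+ω)). Then along solutions of the two-strain density system in the open positive octant, the Lyapunov function W(x,y,z) = x₂(∫_{x₁}^{x} ψ₁(s)/f₁(s) ds + ∫_{F₁(x₁)}^{y} (s − F₁(x₁))/s ds) + x₁·z has derivative Ẇ = x₂ψ₁(x)(F₁(x) − F₁(x₁)) + z β₁β₂ x² (x₁ − x₂)/f₁(x) ≤ 0. -/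
/-!
Write `C = F₁(x₁)`. Since `ψ₁(x) = β₁(x - x₁)` and `λ - (λ + ω)x = β₁ x F₁(x)`, the equations read
`ẋ = β₁x(F₁(x) - y) - β₂xz`, `ẏ = β₁y(x - x₁)`, `ż = β₂z(x - x₂)`. By the fundamental theorem of
calculus, `Ẇ = x₂((1 - x₁/x)ẋ + (1 - C/y)ẏ) + x₁ż`; the `y`-terms cancel, leaving
`x₂ψ₁(x)(F₁(x) - C) + β₂xz(x₁ - x₂)`. The first term is `≤ 0` because `F₁` is decreasing on
`(0, ∞)`, the second because `x₁ < x₂`; the condition `x₁ < λ/(λ + ω)` makes `C > 0`, so that the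
`y`-integral stays away from the singularity at `0`.
-/

open Set intervalIntegral

lemma mul_lt_of_lt_div_of_pos {a b c : ℝ} (ha : 0 < a) (hb : 0 < b) (h : b < a / c) :
    b * c < a := by
  rcases le_or_gt c 0 with hc | hc
  · nlinarith
  · exact (lt_div_iff₀ hc).mp h

lemma antitoneOn_sub_mul_div_mul {a b c : ℝ} (ha : 0 ≤ a) (hc : 0 < c) :
    AntitoneOn (fun s => (a - b * s) / (c * s)) (Ioi 0) := by
  intro u (hu : 0 < u) v (hv : 0 < v) huv
  rw [div_le_div_iff₀ (by positivity) (by positivity)]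
  nlinarith [mul_le_mul_of_nonneg_left huv (mul_nonneg ha hc.le)]

lemma hasDerivAt_integral_of_continuousOn_Ioi {g : ℝ → ℝ} {p a : ℝ}
    (hg : ContinuousOn g (Ioi 0)) (hp : 0 < p) (ha : 0 < a) :
    HasDerivAt (fun b => ∫ s in p..b, g s) (g a) a := by
  have hsub : uIcc p a ⊆ Ioi 0 := fun s hs => lt_of_lt_of_le (lt_min hp ha) hs.1
  exact integral_hasDerivAt_right ((hg.mono hsub).intervalIntegrable)
    (hg.stronglyMeasurableAtFilter isOpen_Ioi a ha) (hg.continuousAt (Ioi_mem_nhds ha))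

lemma HasDerivAt.const_mul_integrals_add {g h x y z : ℝ → ℝ} {x' y' z' p q c d t : ℝ}
    (hg : ContinuousOn g (Ioi 0)) (hh : ContinuousOn h (Ioi 0)) (hp : 0 < p) (hq : 0 < q)
    (hxt : 0 < x t) (hyt : 0 < y t)
    (hx : HasDerivAt x x' t) (hy : HasDerivAt y y' t) (hz : HasDerivAt z z' t) :
    HasDerivAt (fun s => c * ((∫ u in p..x s, g u) + ∫ u in q..y s, h u) + d * z s)
      (c * (g (x t) * x' + h (y t) * y') + d * z') t :=
  (((hasDerivAt_integral_of_continuousOn_Ioi hg hp hxt).comp t hx).add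
    ((hasDerivAt_integral_of_continuousOn_Ioi hh hq hyt).comp t hy) |>.const_mul c).add
    (hz.const_mul d)

theorem lyapunov_derivative_two_strain_general
    (lam beta1 beta2 gam1 gam2 om : ℝ)
    (hlam : 0 < lam) (hb1 : 0 < beta1) (hb2 : 0 < beta2)
    (hg1 : 0 < gam1)
    (f1 F1 psi1 psi2 : ℝ → ℝ) (x1 x2 : ℝ)
    (hf1 : ∀ s, f1 s = beta1 * s)
    (hF1 : ∀ s, F1 s = (lam * (1 - s) - om * s) / (beta1 * s))
    (hpsi1 : ∀ s, psi1 s = beta1 * s - gam1 - lam)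
    (hpsi2 : ∀ s, psi2 s = beta2 * s - gam2 - lam)
    (hx1 : x1 = (gam1 + lam) / beta1) (hx2 : x2 = (gam2 + lam) / beta2)
    (hord : x1 < min x2 (lam / (lam + om)))
    (W : ℝ → ℝ → ℝ → ℝ)
    (hW : ∀ a b c : ℝ, W a b c =
      x2 * ((∫ s in x1..a, psi1 s / f1 s)
            + (∫ s in F1 x1..b, (s - F1 x1) / s)) + x1 * c)
    (x y z : ℝ → ℝ)
    (hxpos : ∀ t, 0 < x t) (hypos : ∀ t, 0 < y t) (hznn : ∀ t, 0 ≤ z t)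
    (hx : ∀ t, HasDerivAt x
      (lam - lam * x t - beta1 * x t * y t - beta2 * x t * z t - om * x t) t)
    (hy : ∀ t, HasDerivAt y (y t * psi1 (x t)) t)
    (hz : ∀ t, HasDerivAt z (z t * psi2 (x t)) t) :
    ∀ t, HasDerivAt (fun s => W (x s) (y s) (z s))
        (x2 * psi1 (x t) * (F1 (x t) - F1 x1)
          + z t * beta1 * beta2 * (x t) ^ 2 * (x1 - x2) / f1 (x t)) t ∧
      x2 * psi1 (x t) * (F1 (x t) - F1 x1)
          + z t * beta1 * beta2 * (x t) ^ 2 * (x1 - x2) / f1 (x t) ≤ 0 := by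
  intro t
  have hX := hxpos t
  have hY := hypos t
  obtain ⟨hx12, hx1F⟩ := lt_min_iff.mp hord
  have hx1pos : 0 < x1 := hx1 ▸ by positivity
  have hF1x1 : 0 < F1 x1 := by
    rw [hF1]
    exact div_pos (by nlinarith [mul_lt_of_lt_div_of_pos hlam hx1pos hx1F]) (by positivity)
  have hψ1 : ∀ s, psi1 s = beta1 * (s - x1) := fun s => by rw [hpsi1, hx1]; field_simp; ring
  have hψ2 : ∀ s, psi2 s = beta2 * (s - x2) := fun s => by rw [hpsi2, hx2]; field_simp; ring
  have hF1_anti : AntitoneOn F1 (Ioi 0) := by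
    convert antitoneOn_sub_mul_div_mul hlam.le hb1 (b := lam + om) using 2 with s
    rw [hF1]; ring
  have hcont1 : ContinuousOn (fun s => psi1 s / f1 s) (Ioi 0) := by
    simp only [hpsi1, hf1]
    exact ContinuousOn.div (by fun_prop) (by fun_prop) fun s hs => (mul_pos hb1 hs).ne'
  have hcont2 : ContinuousOn (fun s => (s - F1 x1) / s) (Ioi 0) :=
    ContinuousOn.div (by fun_prop) (by fun_prop) fun s hs => ne_of_gt hs
  have hxdot : lam - lam * x t - beta1 * x t * y t - beta2 * x t * z t - om * x t
      = beta1 * x t * (F1 (x t) - y t) - beta2 * x t * z t := by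
    rw [hF1]; field_simp; ring
  simp only [hW]
  refine ⟨(HasDerivAt.const_mul_integrals_add hcont1 hcont2 hx1pos hF1x1 hX hY
    (hx t) (hy t) (hz t)).congr_deriv ?_, ?_⟩
  · rw [hxdot, hψ1, hψ2, hf1]
    field_simp
    ring
  · have hmono : (F1 (x t) - F1 x1) * (x t - x1) ≤ 0 :=
      (antivaryOn_id_iff.mpr hF1_anti).sub_mul_sub_nonpos hx1pos hX
    rw [hψ1, hf1]
    refine add_nonpos ?_ (div_nonpos_of_nonpos_of_nonneg ?_ (by positivity))
    · nlinarith [mul_nonpos_of_nonneg_of_nonpos (mul_pos (hx1pos.trans hx12) hb1).le hmono]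
    · exact mul_nonpos_of_nonneg_of_nonpos (by have := hznn t; positivity) (by linarith)

/-- Along solutions of the two-strain density system in the open positive
octant, the Lyapunov function `W` has derivative
`Ẇ = x₂ ψ₁(x)(F₁(x) - F₁(x₁)) + z β₁ β₂ x² (x₁ - x₂)/f₁(x) ≤ 0`,
where `f₁(x) = β₁ x`, `F₁(x) = (λ(1-x) - ωx)/(β₁ x)`, `ψᵢ(x) = βᵢ x - γᵢ - λ`,
and `xᵢ = (γᵢ + λ)/βᵢ`. -/
theorem lyapunov_derivative_two_strain
    (lam beta1 beta2 gam1 gam2 om : ℝ)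
    (hlam : 0 < lam) (hb1 : 0 < beta1) (hb2 : 0 < beta2)
    (hg1 : 0 < gam1) (hg2 : 0 < gam2) (hom : 0 ≤ om)
    (f1 F1 psi1 psi2 : ℝ → ℝ) (x1 x2 : ℝ)
    (hf1 : ∀ s, f1 s = beta1 * s)
    (hF1 : ∀ s, F1 s = (lam * (1 - s) - om * s) / (beta1 * s))
    (hpsi1 : ∀ s, psi1 s = beta1 * s - gam1 - lam)
    (hpsi2 : ∀ s, psi2 s = beta2 * s - gam2 - lam)
    (hx1 : x1 = (gam1 + lam) / beta1) (hx2 : x2 = (gam2 + lam) / beta2)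
    (hord : x1 < min x2 (lam / (lam + om)))
    (W : ℝ → ℝ → ℝ → ℝ)
    (hW : ∀ a b c : ℝ, W a b c =
      x2 * ((∫ s in x1..a, psi1 s / f1 s)
            + (∫ s in F1 x1..b, (s - F1 x1) / s)) + x1 * c)
    (x y z : ℝ → ℝ)
    (hxpos : ∀ t, 0 < x t) (hypos : ∀ t, 0 < y t) (hznn : ∀ t, 0 ≤ z t)
    (hx : ∀ t, HasDerivAt x
      (lam - lam * x t - beta1 * x t * y t - beta2 * x t * z t - om * x t) t)
    (hy : ∀ t, HasDerivAt y (y t * psi1 (x t)) t)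
    (hz : ∀ t, HasDerivAt z (z t * psi2 (x t)) t) :
    ∀ t, HasDerivAt (fun s => W (x s) (y s) (z s))
        (x2 * psi1 (x t) * (F1 (x t) - F1 x1)
          + z t * beta1 * beta2 * (x t) ^ 2 * (x1 - x2) / f1 (x t)) t ∧
      x2 * psi1 (x t) * (F1 (x t) - F1 x1)
          + z t * beta1 * beta2 * (x t) ^ 2 * (x1 - x2) / f1 (x t) ≤ 0 :=
  lyapunov_derivative_two_strain_general lam beta1 beta2 gam1 gam2 om hlam hb1 hb2 hg1 f1 F1 psi1
    psi2 x1 x2 hf1 hF1 hpsi1 hpsi2 hx1 hx2 hord W hW x y z hxpos hypos hznn hx hy hz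
end

section
/- If (γ₁+λ)/β₁ ≥ λ/(λ+ω) and (γ₂+λ)/β₂ ≥ λ/(λ+ω), then the disease-free equilibrium (λ/(λ+ω), 0, 0) is the only equilibrium of the two-strain density system in the simplex {x ≥ 0, y ≥ 0, z ≥ 0, x+y+z ≤ 1}. -/
/-!
At an equilibrium the susceptible equation reads `λ = (λ + ω) x + β₁ x y + β₂ x z`. If strain 1
were present (`y > 0`), its equation would force `β₁ x = γ₁ + λ`, and the threshold hypothesis
turns this into `(λ + ω) x ≥ λ`; but then the infection term `β₁ x y > 0` overshoots `λ`.
The same holds for strain 2, and with `y = z = 0` the susceptible equation pins down `x`.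
-/

/-- `s` stands for the infection pressure `β' x z` of the competing strain. -/
lemma infected_eq_zero_of_threshold {lam om beta gam x y s : ℝ} (hlam : 0 < lam) (hom : 0 ≤ om)
    (hb : 0 < beta) (h : lam / (lam + om) ≤ (gam + lam) / beta) (hy : 0 ≤ y) (hs : 0 ≤ s)
    (hsus : lam - (lam + om) * x - beta * x * y - s = 0)
    (hinf : y * (beta * x - gam - lam) = 0) : y = 0 := by
  by_contra hy0
  have hβx : beta * x = gam + lam := by
    have := (mul_eq_zero.mp hinf).resolve_left hy0
    linarith
  have hlo : 0 < lam + om := by linarith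
  have hxlam : lam ≤ (lam + om) * x := by
    rw [← hβx, mul_div_cancel_left₀ x hb.ne'] at h
    exact (div_le_iff₀' hlo).mp h
  have hxpos : 0 < x := pos_of_mul_pos_right (hlam.trans_le hxlam) hlo.le
  have : 0 < beta * x * y := by positivity
  linarith

theorem disease_free_unique_equilibrium_general
    (lam beta1 beta2 gam1 gam2 om : ℝ)
    (hlam : 0 < lam) (hb1 : 0 < beta1) (hb2 : 0 < beta2)
    (hom : 0 ≤ om)
    (h1 : (gam1 + lam) / beta1 ≥ lam / (lam + om))
    (h2 : (gam2 + lam) / beta2 ≥ lam / (lam + om)) :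
    ∀ x y z : ℝ, 0 ≤ x → 0 ≤ y → 0 ≤ z → x + y + z ≤ 1 →
      lam - lam * x - beta1 * x * y - beta2 * x * z - om * x = 0 →
      y * (beta1 * x - gam1 - lam) = 0 →
      z * (beta2 * x - gam2 - lam) = 0 →
      x = lam / (lam + om) ∧ y = 0 ∧ z = 0 := by
  intro x y z hx hy hz _ hsus hinf1 hinf2
  have hlo : 0 < lam + om := by linarith
  have hy0 : y = 0 :=
    infected_eq_zero_of_threshold hlam hom hb1 h1 hy (by positivity : 0 ≤ beta2 * x * z)
      (by linarith) hinf1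
  have hz0 : z = 0 :=
    infected_eq_zero_of_threshold hlam hom hb2 h2 hz (by positivity : 0 ≤ beta1 * x * y)
      (by linarith) hinf2
  subst hy0 hz0
  refine ⟨?_, rfl, rfl⟩
  rw [eq_div_iff hlo.ne']
  linarith

/-- If `(γ₁+λ)/β₁ ≥ λ/(λ+ω)` and `(γ₂+λ)/β₂ ≥ λ/(λ+ω)`, then the disease-free
equilibrium `(λ/(λ+ω), 0, 0)` is the only equilibrium of the two-strain density
system in the simplex. -/
theorem disease_free_unique_equilibrium
    (lam beta1 beta2 gam1 gam2 om : ℝ)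
    (hlam : 0 < lam) (hb1 : 0 < beta1) (hb2 : 0 < beta2)
    (hg1 : 0 < gam1) (hg2 : 0 < gam2) (hom : 0 ≤ om)
    (h1 : (gam1 + lam) / beta1 ≥ lam / (lam + om))
    (h2 : (gam2 + lam) / beta2 ≥ lam / (lam + om)) :
    ∀ x y z : ℝ, 0 ≤ x → 0 ≤ y → 0 ≤ z → x + y + z ≤ 1 →
      lam - lam * x - beta1 * x * y - beta2 * x * z - om * x = 0 →
      y * (beta1 * x - gam1 - lam) = 0 →
      z * (beta2 * x - gam2 - lam) = 0 →
      x = lam / (lam + om) ∧ y = 0 ∧ z = 0 :=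
  disease_free_unique_equilibrium_general lam beta1 beta2 gam1 gam2 om hlam hb1 hb2 hom h1 h2
end

section
/- For the single-strain density system with x* = (γ+λ)/β < λ/(λ+ω), the function V(x,y) = ∫_{x*}^{x} (βs − γ − λ)/(βs) ds + ∫_{F(x*)}^{y} (s − F(x*))/s ds is nonnegative on the open positive quadrant, vanishes exactly at (x*, F(x*)), and its derivative along solutions is V̇ = ψ(x)(F(x) − F(x*)) ≤ 0, where ψ(x) = βx − γ − λ. -/
/-!
Up to the factor `β`, both integrands have the form `(s - c) / s`, whose integral from `c` to
`u > 0` is the Volterra function `u - c - c log (u / c) = c (r - 1 - log r)` with `r = u / c`; it is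
nonnegative by `log r ≤ r - 1`, with equality only at `r = 1`. Along a solution of the Gause-type
system `ẋ = f(x)(F(x) - y)`, `ẏ = y ψ(x)` the chain rule gives
`V̇ = ψ(x)(F(x) - y) + (y - F(x*)) ψ(x) = ψ(x)(F(x) - F(x*))`, which is `≤ 0` because `ψ` is
increasing, `F` is decreasing and `ψ(x*) = 0`.
-/

open Real Set

noncomputable def volterra (c u : ℝ) : ℝ := u - c - c * log (u / c)

section Volterra

variable {c u : ℝ}

theorem hasDerivAt_volterra (hc : c ≠ 0) (hu : u ≠ 0) :
    HasDerivAt (volterra c) ((u - c) / u) u := by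
  have hlog : HasDerivAt (fun v => log (v / c)) (1 / c / (u / c)) u :=
    ((hasDerivAt_id u).div_const c).log (div_ne_zero hu hc)
  refine (((hasDerivAt_id u).sub_const c).sub (hlog.const_mul c)).congr_deriv ?_
  field_simp

theorem integral_sub_div_self (hc : 0 < c) (hu : 0 < u) :
    ∫ s in c..u, (s - c) / s = volterra c u := by
  have hzero : ∀ s ∈ uIcc c u, s ≠ 0 := fun s hs => by
    rintro rfl
    exact notMem_uIcc_of_lt hc hu hs
  have hint : IntervalIntegrable (fun s => (s - c) / s) MeasureTheory.volume c u :=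
    ((continuousOn_id.sub continuousOn_const).div continuousOn_id hzero).intervalIntegrable
  rw [intervalIntegral.integral_eq_sub_of_hasDerivAt
    (fun s hs => hasDerivAt_volterra hc.ne' (hzero s hs)) hint]
  simp [volterra, hc.ne']

theorem volterra_eq_mul (hc : c ≠ 0) : volterra c u = c * (u / c - 1 - log (u / c)) := by
  unfold volterra
  field_simp

theorem volterra_nonneg (hc : 0 < c) (hu : 0 < u) : 0 ≤ volterra c u := by
  rw [volterra_eq_mul hc.ne']
  have := log_le_sub_one_of_pos (div_pos hu hc)
  exact mul_nonneg hc.le (by linarith)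

theorem volterra_eq_zero_iff (hc : 0 < c) (hu : 0 < u) : volterra c u = 0 ↔ u = c := by
  refine ⟨fun h => ?_, fun h => by simp [h, volterra, hc.ne']⟩
  by_contra hne
  have hlt := log_lt_sub_one_of_pos (div_pos hu hc) (by rwa [ne_eq, div_eq_one_iff_eq hc.ne'])
  rw [volterra_eq_mul hc.ne'] at h
  have : 0 < c * (u / c - 1 - log (u / c)) := mul_pos hc (by linarith)
  linarith

end Volterra

theorem hasDerivAt_gause_lyapunov {f F ψ G H x y : ℝ → ℝ} {c t : ℝ}
    (hG : HasDerivAt G (ψ (x t) / f (x t)) (x t)) (hH : HasDerivAt H ((y t - c) / y t) (y t))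
    (hf : f (x t) ≠ 0) (hy0 : y t ≠ 0)
    (hx : HasDerivAt x (f (x t) * (F (x t) - y t)) t) (hy : HasDerivAt y (y t * ψ (x t)) t) :
    HasDerivAt (fun s => G (x s) + H (y s)) (ψ (x t) * (F (x t) - c)) t := by
  refine ((hG.comp t hx).add (hH.comp t hy)).congr_deriv ?_
  field_simp
  ring

theorem mul_sub_nonpos_of_monotoneOn_of_antitoneOn {α : Type*} [LinearOrder α] {s : Set α}
    {ψ F : α → ℝ} {a b : α} (hψ : MonotoneOn ψ s) (hF : AntitoneOn F s) (ha : a ∈ s)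
    (hb : b ∈ s) (hψb : ψ b = 0) : ψ a * (F a - F b) ≤ 0 := by
  rcases le_total a b with hab | hba
  · exact mul_nonpos_of_nonpos_of_nonneg (hψb ▸ hψ ha hb hab) (sub_nonneg.2 (hF ha hb hab))
  · exact mul_nonpos_of_nonneg_of_nonpos (hψb ▸ hψ hb ha hba) (sub_nonpos.2 (hF hb ha hba))

section SingleStrain

variable {lam beta om : ℝ}

theorem antitoneOn_nullcline (hlam : 0 ≤ lam) (hbeta : 0 < beta) :
    AntitoneOn (fun s => (lam * (1 - s) - om * s) / (beta * s)) (Ioi 0) := by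
  intro a (ha : 0 < a) b (hb : 0 < b) hab
  have hsplit : ∀ s, 0 < s →
      (lam * (1 - s) - om * s) / (beta * s) = lam / (beta * s) - (lam + om) / beta := by
    intro s hs
    field_simp
    ring
  simp only [hsplit a ha, hsplit b hb]
  gcongr

theorem nullcline_pos {xs : ℝ} (hlam : 0 < lam) (hbeta : 0 < beta) (hxs : 0 < xs)
    (hlt : xs < lam / (lam + om)) : 0 < (lam * (1 - xs) - om * xs) / (beta * xs) := by
  have hlo : 0 < lam + om := by
    rcases div_pos_iff.1 (hxs.trans hlt) with h | h
    · exact h.2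
    · exact absurd h.1 hlam.not_gt
  have := (lt_div_iff₀ hlo).1 hlt
  apply div_pos _ (by positivity)
  linarith

end SingleStrain

theorem lyapunov_single_strain_general
    (lam beta gam om : ℝ)
    (hlam : 0 < lam) (hbeta : 0 < beta) (hgam : 0 < gam)
    (F psi : ℝ → ℝ) (xs : ℝ)
    (hF : ∀ s, F s = (lam * (1 - s) - om * s) / (beta * s))
    (hpsi : ∀ s, psi s = beta * s - gam - lam)
    (hxs : xs = (gam + lam) / beta)
    (hlt : xs < lam / (lam + om))
    (V : ℝ → ℝ → ℝ)
    (hV : ∀ a b : ℝ, V a b =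
      (∫ s in xs..a, psi s / (beta * s)) + (∫ s in F xs..b, (s - F xs) / s)) :
    (∀ a b : ℝ, 0 < a → 0 < b → 0 ≤ V a b) ∧
    (∀ a b : ℝ, 0 < a → 0 < b → (V a b = 0 ↔ a = xs ∧ b = F xs)) ∧
    (∀ x y : ℝ → ℝ,
      (∀ t, 0 < x t) → (∀ t, 0 < y t) →
      (∀ t, HasDerivAt x (beta * x t * (F (x t) - y t)) t) →
      (∀ t, HasDerivAt y (y t * psi (x t)) t) →
      ∀ t, HasDerivAt (fun s => V (x s) (y s))
            (psi (x t) * (F (x t) - F xs)) t ∧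
          psi (x t) * (F (x t) - F xs) ≤ 0) := by
  have hxs0 : 0 < xs := hxs ▸ by positivity
  have hc : 0 < F xs := hF xs ▸ nullcline_pos hlam hbeta hxs0 hlt
  have hpsi_div : ∀ s, psi s / (beta * s) = (s - xs) / s := fun s => by
    rw [hpsi, hxs]
    field_simp
    ring
  have hV_eq : ∀ a b, 0 < a → 0 < b → V a b = volterra xs a + volterra (F xs) b :=
    fun a b ha hb => by
      simp only [hV, hpsi_div, integral_sub_div_self hxs0 ha, integral_sub_div_self hc hb]
  refine ⟨fun a b ha hb => ?_, fun a b ha hb => ?_, fun x y hx0 hy0 hx hy t => ⟨?_, ?_⟩⟩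
  · rw [hV_eq a b ha hb]
    exact add_nonneg (volterra_nonneg hxs0 ha) (volterra_nonneg hc hb)
  · rw [hV_eq a b ha hb, add_eq_zero_iff_of_nonneg (volterra_nonneg hxs0 ha)
      (volterra_nonneg hc hb), volterra_eq_zero_iff hxs0 ha, volterra_eq_zero_iff hc hb]
  · have hG := hasDerivAt_volterra hxs0.ne' (hx0 t).ne'
    rw [← hpsi_div] at hG
    convert hasDerivAt_gause_lyapunov (f := fun s => beta * s) hG
      (hasDerivAt_volterra hc.ne' (hy0 t).ne') (mul_pos hbeta (hx0 t)).ne' (hy0 t).ne'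
      (hx t) (hy t) using 1
    exact funext fun s => hV_eq _ _ (hx0 s) (hy0 s)
  · have hF_anti : AntitoneOn F (Ioi 0) := by
      simpa only [← funext hF] using antitoneOn_nullcline (om := om) hlam.le hbeta
    have hpsi_mono : Monotone psi := fun a b hab => by
      simp only [hpsi]
      gcongr
    refine mul_sub_nonpos_of_monotoneOn_of_antitoneOn (hpsi_mono.monotoneOn _) hF_anti
      (hx0 t) hxs0 ?_
    rw [hpsi, hxs]
    field_simp
    ring

/-- For the single-strain density system with endemic equilibrium
`x* = (γ+λ)/β < λ/(λ+ω)`, the Lyapunov function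
`V(x,y) = ∫_{x*}^{x} ψ(s)/(βs) ds + ∫_{F(x*)}^{y} (s - F(x*))/s ds`
is nonnegative on the open positive quadrant, vanishes exactly at
`(x*, F(x*))`, and its derivative along solutions equals
`ψ(x)(F(x) - F(x*)) ≤ 0`, where `ψ(x) = βx - γ - λ` and
`F(x) = (λ(1-x) - ωx)/(βx)`. -/
theorem lyapunov_single_strain
    (lam beta gam om : ℝ)
    (hlam : 0 < lam) (hbeta : 0 < beta) (hgam : 0 < gam) (hom : 0 ≤ om)
    (F psi : ℝ → ℝ) (xs : ℝ)
    (hF : ∀ s, F s = (lam * (1 - s) - om * s) / (beta * s))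
    (hpsi : ∀ s, psi s = beta * s - gam - lam)
    (hxs : xs = (gam + lam) / beta)
    (hlt : xs < lam / (lam + om))
    (V : ℝ → ℝ → ℝ)
    (hV : ∀ a b : ℝ, V a b =
      (∫ s in xs..a, psi s / (beta * s)) + (∫ s in F xs..b, (s - F xs) / s)) :
    (∀ a b : ℝ, 0 < a → 0 < b → 0 ≤ V a b) ∧
    (∀ a b : ℝ, 0 < a → 0 < b → (V a b = 0 ↔ a = xs ∧ b = F xs)) ∧
    (∀ x y : ℝ → ℝ,
      (∀ t, 0 < x t) → (∀ t, 0 < y t) →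
      (∀ t, HasDerivAt x (beta * x t * (F (x t) - y t)) t) →
      (∀ t, HasDerivAt y (y t * psi (x t)) t) →
      ∀ t, HasDerivAt (fun s => V (x s) (y s))
            (psi (x t) * (F (x t) - F xs)) t ∧
          psi (x t) * (F (x t) - F xs) ≤ 0) :=
  lyapunov_single_strain_general lam beta gam om hlam hbeta hgam F psi xs hF hpsi hxs hlt V hV
end
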